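/- Let Λ = k[ε]/(ε²) be the exterior algebra on one generator over a field k, viewed as a graded algebra with deg ε = 1 and zero differential, and let P be the Λ-dg-module ⊕_{i≥0} Λ·e_i with d(e_0) = 0, d(e_i) = ε·e_{i-1} for i > 0, deg e_i = 0. Then the algebra of degree-zero Λ-linear endomorphisms of P commuting with the differential is isomorphic to the power series ring k[[t]], where t is the shift map e_i ↦ e_{i-1}. -/

import Mathlib

open Finsupp

/-- The differential of the dg-module `P = ⊕_{i ≥ 0} Λ·e_i` over `Λ = k[ε]/(ε²)`:
`d e_0 = 0` and `d e_i = ε·e_{i-1}` for `i > 0`. -/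
noncomputable def koszulDiff (k : Type u) [Field k] :
    (ℕ →₀ DualNumber k) →ₗ[DualNumber k] (ℕ →₀ DualNumber k) :=
  Finsupp.lsum (DualNumber k) fun i =>
    match i with
    | 0 => 0
    | (j + 1) => (Finsupp.lsingle j).comp
        (LinearMap.toSpanSingleton (DualNumber k) (DualNumber k) DualNumber.eps)

/-!
An endomorphism `φ` of `P = ⊕ Λ e_i` is determined by its matrix entries `φ(e_i)_j ∈ Λ`, and
being of degree zero means that they lie in `k`. Comparing `ε`-components in `φ d = d φ` gives
`φ(e_{i+1})_{j+1} = φ(e_i)_j` and `φ(e_0)_{j+1} = 0`, so the matrix is an upper triangular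
Toeplitz matrix: `φ(e_i)_j = a_{i-j}` for `j ≤ i`, where `a_r = φ(e_r)_0`, i.e. `φ = ∑ a_r t^r`.
Conversely every power series `f` in the shift `t` makes sense on each `e_i` (the sum is finite
there) and commutes with `d`, and composing such Toeplitz matrices multiplies the series.
-/

open Finset PowerSeries

theorem lhom_ext_of_apply_single_one {A ι κ : Type*} [Semiring A] {φ ψ : (ι →₀ A) →ₗ[A] (κ →₀ A)}
    (h : ∀ i s, φ (single i 1) s = ψ (single i 1) s) : φ = ψ :=
  Finsupp.lhom_ext' fun i => LinearMap.ext_ring <| Finsupp.ext (h i)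

section ShiftSeries

variable {R : Type*} [CommRing R]

/-- `f(t)` for the shift `t : e_i ↦ e_{i-1}`, that is `e_i ↦ ∑_{p + q = i} f_p e_q`. -/
noncomputable def shiftSeries (f : PowerSeries R) :
    Module.End (DualNumber R) (ℕ →₀ DualNumber R) :=
  Finsupp.linearCombination (DualNumber R) fun i =>
    ∑ x ∈ antidiagonal i, single x.2 (algebraMap R (DualNumber R) (coeff x.1 f))

theorem shiftSeries_single_one_apply (f : PowerSeries R) (i s : ℕ) :
    shiftSeries f (single i 1) s =
      if s ≤ i then algebraMap R (DualNumber R) (coeff (i - s) f) else 0 := by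
  simp only [shiftSeries, Finsupp.linearCombination_single, one_smul, Finsupp.finsetSum_apply,
    single_apply, ← Finset.sum_filter]
  rw [HasAntidiagonal.filter_snd_eq_antidiagonal i s]
  split_ifs <;> simp

theorem shiftSeries_single_apply (f : PowerSeries R) (i s : ℕ) (a : DualNumber R) :
    shiftSeries f (single i a) s =
      a * if s ≤ i then algebraMap R (DualNumber R) (coeff (i - s) f) else 0 := by
  rw [← shiftSeries_single_one_apply, ← smul_eq_mul, ← Finsupp.smul_apply, ← map_smul,
    Finsupp.smul_single, smul_eq_mul, mul_one]

theorem snd_shiftSeries_single_one_apply (f : PowerSeries R) (i s : ℕ) :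
    (shiftSeries f (single i 1) s).snd = 0 := by
  rw [shiftSeries_single_one_apply]
  split_ifs <;> simp [TrivSqZeroExt.algebraMap_eq_inl]

theorem shiftSeries_add (f g : PowerSeries R) :
    shiftSeries (f + g) = shiftSeries f + shiftSeries g :=
  lhom_ext_of_apply_single_one fun i s => by
    simp only [LinearMap.add_apply, Finsupp.add_apply, shiftSeries_single_one_apply]
    split_ifs <;> simp

theorem shiftSeries_algebraMap (c : R) :
    shiftSeries (algebraMap R (PowerSeries R) c) =
      algebraMap R (Module.End (DualNumber R) (ℕ →₀ DualNumber R)) c :=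
  lhom_ext_of_apply_single_one fun i s => by
    simp only [shiftSeries_single_one_apply, Module.algebraMap_end_apply, Finsupp.smul_apply,
      single_apply, PowerSeries.algebraMap_apply, coeff_C]
    split_ifs <;> first | omega | simp [Algebra.smul_def]

theorem shiftSeries_mul (f g : PowerSeries R) :
    shiftSeries (f * g) = shiftSeries f * shiftSeries g := by
  refine lhom_ext_of_apply_single_one fun i s => ?_
  have hg : shiftSeries g (single i 1) =
      ∑ x ∈ antidiagonal i, single x.2 (algebraMap R (DualNumber R) (coeff x.1 g)) := by
    simp [shiftSeries]
  rw [Module.End.mul_apply, hg, map_sum, Finsupp.finsetSum_apply, shiftSeries_single_one_apply]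
  simp only [shiftSeries_single_apply, mul_ite, mul_zero, ← Finset.sum_filter]
  -- the terms of `∑_{p+q=i} g_p f_{q-s}` with `s ≤ q` are `∑_{p+r=i-s} g_p f_r`, via `q = r + s`
  split_ifs with hs
  · rw [Finset.Nat.antidiagonal_filter_le_snd_of_le hs, Finset.sum_map, mul_comm f, coeff_mul,
      map_sum]
    simp [map_mul]
  · rw [Finset.filter_false_of_mem fun x hx => ?_, Finset.sum_empty]
    have := HasAntidiagonal.antidiagonal.snd_le hx
    omega

variable (R) in
noncomputable def shiftSeriesAlgHom :
    PowerSeries R →ₐ[R] Module.End (DualNumber R) (ℕ →₀ DualNumber R) where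
  toFun := shiftSeries
  map_one' := by simpa using shiftSeries_algebraMap (1 : R)
  map_mul' := shiftSeries_mul
  map_zero' := by simpa using shiftSeries_algebraMap (0 : R)
  map_add' := shiftSeries_add
  commutes' := shiftSeries_algebraMap

theorem shiftSeriesAlgHom_injective : Function.Injective (shiftSeriesAlgHom R) := by
  intro f g hfg
  ext n
  have : shiftSeries f (single n 1) 0 = shiftSeries g (single n 1) 0 := congr($hfg (single n 1) 0)
  simpa [shiftSeries_single_one_apply, TrivSqZeroExt.algebraMap_eq_inl,
    TrivSqZeroExt.inl_injective.eq_iff] using this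

theorem shiftSeries_X_single_zero : shiftSeries (X : PowerSeries R) (single 0 1) = 0 :=
  Finsupp.ext fun s => by
    simp [shiftSeries_single_one_apply, coeff_X]

theorem shiftSeries_X_single_succ (j : ℕ) :
    shiftSeries (X : PowerSeries R) (single (j + 1) 1) = single j 1 :=
  Finsupp.ext fun s => by
    simp only [shiftSeries_single_one_apply, coeff_X, single_apply]
    split_ifs <;> first | omega | simp

end ShiftSeries

section KoszulDiff

variable {k : Type*} [Field k]

theorem koszulDiff_single_zero (a : DualNumber k) : koszulDiff k (single 0 a) = 0 := by
  simp [koszulDiff]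

theorem koszulDiff_single_succ (j : ℕ) (a : DualNumber k) :
    koszulDiff k (single (j + 1) a) = single j (a * DualNumber.eps) := by
  simp [koszulDiff, smul_eq_mul]

theorem koszulDiff_apply (x : ℕ →₀ DualNumber k) (j : ℕ) :
    koszulDiff k x j = x (j + 1) * DualNumber.eps := by
  induction x using Finsupp.induction_linear with
  | zero => simp
  | add x y hx hy => simp [hx, hy, add_mul]
  | single i a =>
    cases i with
    | zero => simp [koszulDiff_single_zero]
    | succ i => by_cases h : i = j <;> simp [koszulDiff_single_succ, h]

theorem shiftSeries_comp_koszulDiff (f : PowerSeries k) :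
    shiftSeries f ∘ₗ koszulDiff k = koszulDiff k ∘ₗ shiftSeries f := by
  refine lhom_ext_of_apply_single_one fun i s => ?_
  rw [LinearMap.comp_apply, LinearMap.comp_apply, koszulDiff_apply, shiftSeries_single_one_apply]
  cases i with
  | zero => simp [koszulDiff_single_zero]
  | succ i =>
    rw [koszulDiff_single_succ, shiftSeries_single_apply, one_mul, mul_comm]
    simp [Nat.add_sub_add_right]

variable {φ : Module.End (DualNumber k) (ℕ →₀ DualNumber k)}

theorem fst_apply_single_zero_succ_of_comp_koszulDiff
    (hφ : φ ∘ₗ koszulDiff k = koszulDiff k ∘ₗ φ) (j : ℕ) :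
    (φ (single 0 1) (j + 1)).fst = 0 := by
  simpa [koszulDiff_single_zero, koszulDiff_apply, eq_comm] using congr(($hφ (single 0 1) j).snd)

theorem fst_apply_single_succ_succ_of_comp_koszulDiff
    (hφ : φ ∘ₗ koszulDiff k = koszulDiff k ∘ₗ φ) (i j : ℕ) :
    (φ (single (i + 1) 1) (j + 1)).fst = (φ (single i 1) j).fst := by
  have := congr(($hφ (single (i + 1) 1) j).snd)
  rw [LinearMap.comp_apply, LinearMap.comp_apply, koszulDiff_single_succ, one_mul,
    ← Finsupp.smul_single_one, map_smul] at this
  simpa [koszulDiff_apply, eq_comm] using this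

theorem fst_apply_single_of_comp_koszulDiff (hφ : φ ∘ₗ koszulDiff k = koszulDiff k ∘ₗ φ)
    (j i : ℕ) :
    (φ (single i 1) j).fst = if j ≤ i then (φ (single (i - j) 1) 0).fst else 0 := by
  induction j generalizing i with
  | zero => simp
  | succ j ih =>
    cases i with
    | zero => simp [fst_apply_single_zero_succ_of_comp_koszulDiff hφ]
    | succ i => simp [fst_apply_single_succ_succ_of_comp_koszulDiff hφ, ih]

theorem eq_shiftSeries_of_comp_koszulDiff (hφ₀ : ∀ i j, (φ (single i 1) j).snd = 0)
    (hφ : φ ∘ₗ koszulDiff k = koszulDiff k ∘ₗ φ) :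
    φ = shiftSeries (PowerSeries.mk fun r => (φ (single r 1) 0).fst) := by
  refine lhom_ext_of_apply_single_one fun i j => TrivSqZeroExt.ext ?_ ?_
  · rw [fst_apply_single_of_comp_koszulDiff hφ, shiftSeries_single_one_apply]
    split_ifs <;> simp [TrivSqZeroExt.algebraMap_eq_inl]
  · rw [hφ₀, snd_shiftSeries_single_one_apply]

end KoszulDiff

/-- Let `Λ = k[ε]/(ε²)` (with `ε` in degree `1`) and let `P = ⊕_{i ≥ 0} Λ·e_i`
(generators `e_i` in degree `0`) with differential `d e_i = ε·e_{i-1}`, `d e_0 = 0`.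
The algebra of degree-zero `Λ`-linear endomorphisms of `P` commuting with the
differential is isomorphic to the power series ring `k[[t]]`: there is an injective
`k`-algebra homomorphism from `k[[t]]` to `End_Λ(P)` whose range is exactly this set,
sending `t` to the shift `e_i ↦ e_{i-1}`. -/
theorem endomorphisms_of_koszul_resolution (k : Type u) [Field k] :
    ∃ F : PowerSeries k →ₐ[k] Module.End (DualNumber k) (ℕ →₀ DualNumber k),
      Function.Injective F ∧
      (∀ i : ℕ, (F PowerSeries.X) (Finsupp.single i 1) =
        match i with
        | 0 => 0
        | (j + 1) => Finsupp.single j 1) ∧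
      Set.range F = {φ : Module.End (DualNumber k) (ℕ →₀ DualNumber k) |
        (∀ i j : ℕ, ((φ (Finsupp.single i 1)) j).snd = 0) ∧
        φ ∘ₗ koszulDiff k = koszulDiff k ∘ₗ φ} := by
  refine ⟨shiftSeriesAlgHom k, shiftSeriesAlgHom_injective, ?_, ?_⟩
  · rintro (_ | j)
    exacts [shiftSeries_X_single_zero, shiftSeries_X_single_succ j]
  · ext φ
    constructor
    · rintro ⟨f, rfl⟩
      exact ⟨snd_shiftSeries_single_one_apply f, shiftSeries_comp_koszulDiff f⟩
    · rintro ⟨hφ₀, hφ⟩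
      exact ⟨_, (eq_shiftSeries_of_comp_koszulDiff hφ₀ hφ).symm⟩
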